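/- arXiv:2412.04221 — 5 statements merged into one kernel-verified Lean document; each statement's English description precedes it below -/
import Mathlib

section
/- Let k be a field of characteristic p > 0 and Q, P finite p-groups. If X is a subgroup of Q × P with trivial intersections X ∩ (Q × 1) = 1 and X ∩ (1 × P) = 1 (a diagonal subgroup), then the (kQ,kP)-bimodule k((Q×P)/X) satisfies k((Q×P)/X) ⊗_{kP} k ≅ k(Q/p₁(X)) as kQ-modules, where p₁(X) is the projection of X to Q. In particular, as an element of R_k(Q), this equals |Q : p₁(X)| · [k_Q], which is 0 in k ⊗_ℤ R_k(Q) unless p₁(X) = Q. -/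
/-!
Taking `1 × P`-coinvariants of the permutation module `k((Q×P)/X)` gives the permutation module
on the orbit set `(1 × P)\(Q×P)/X`, and `[u] ↦ u₁ p₁(X)` identifies this orbit set
`Q`-equivariantly with `Q/p₁(X)`: if `u₁ x₁ = v₁` with `x ∈ X`, then `[v] = [v x⁻¹]` and
`v x⁻¹ = (1, y) u` for a suitable `y ∈ P`. The index of a proper subgroup of the `p`-group `Q` is
a positive power of `p`, hence zero in `k`.
-/

open TensorProduct MulOpposite

/-- The balancing relations defining `M ⊗_{kG} N` inside `M ⊗[k] N`, for a right `kG`-module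
`M` (a representation of `Gᵐᵒᵖ`) and a left `kG`-module `N`;  `M ⊗_{kG} N` is the quotient of
`M ⊗[k] N` by this submodule. -/
def balancedRel (k : Type) [Field k] (G : Type) [Group G]
    {M N : Type} [AddCommMonoid M] [Module k M] [AddCommMonoid N] [Module k N]
    (σ : Representation k Gᵐᵒᵖ M) (ρ : Representation k G N) :
    Submodule k (M ⊗[k] N) :=
  Submodule.span k {x | ∃ (g : G) (m : M) (n : N),
    x = σ (op g) m ⊗ₜ[k] n + (-1 : k) • (m ⊗ₜ[k] ρ g n)}

noncomputable section

namespace Finsupp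

variable {k α β : Type} [Field k]

/-- When the fibres of `f` are the orbits of a permutation action on `α`, this is the quotient map
of `k α ⊗ k` onto the coinvariants of `k α`. -/
def lmapDomainRid (f : α → β) : (α →₀ k) ⊗[k] k →ₗ[k] (β →₀ k) :=
  lmapDomain k k f ∘ₗ (TensorProduct.rid k (α →₀ k)).toLinearMap

@[simp]
lemma lmapDomainRid_tmul (f : α → β) (m : α →₀ k) (c : k) :
    lmapDomainRid f (m ⊗ₜ c) = c • mapDomain f m := by
  simp [lmapDomainRid]

lemma lmapDomainRid_surjective {f : α → β} (hf : Function.Surjective f) :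
    Function.Surjective (lmapDomainRid (k := k) f) :=
  (mapDomain_surjective hf).comp (TensorProduct.rid k (α →₀ k)).surjective

lemma lmapDomainRid_mapDomain {f : α → β} {u : α → α} {v : β → β} (h : f ∘ u = v ∘ f)
    (m : α →₀ k) (c : k) :
    lmapDomainRid f (mapDomain u m ⊗ₜ c) = mapDomain v (lmapDomainRid f (m ⊗ₜ c)) := by
  simp only [lmapDomainRid_tmul, mapDomain_smul, ← mapDomain_comp, h]

section Coinvariants

variable {G : Type} [Group G] (σ : Representation k Gᵐᵒᵖ (α →₀ k)) {act : G → α → α}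
  {f : α → β}

lemma lmapDomain_comp_representation (hσ : ∀ g a, σ (op g) (single a 1) = single (act g a) 1)
    (hf : ∀ g a, f (act g a) = f a) (g : G) :
    lmapDomain k k f ∘ₗ σ (op g) = lmapDomain k k f := by
  ext a
  simp [hσ, hf]

lemma balancedRel_le_ker_lmapDomainRid (hσ : ∀ g a, σ (op g) (single a 1) = single (act g a) 1)
    (hf : ∀ g a, f (act g a) = f a) :
    balancedRel k G σ (1 : Representation k G k) ≤ LinearMap.ker (lmapDomainRid f) := by
  rw [balancedRel, Submodule.span_le]
  rintro _ ⟨g, m, c, rfl⟩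
  have hm : mapDomain f (σ (op g) m) = mapDomain f m :=
    LinearMap.congr_fun (lmapDomain_comp_representation σ hσ hf g) m
  simp [hm]

lemma ker_lmapDomainRid_le_balancedRel (hσ : ∀ g a, σ (op g) (single a 1) = single (act g a) 1)
    (hf : Function.Surjective f) (horb : ∀ a b, f a = f b → ∃ g, act g a = b) :
    LinearMap.ker (lmapDomainRid f) ≤ balancedRel k G σ 1 := by
  set sec := Function.surjInv hf
  -- On a basis vector `a`, the map `m ↦ (m - sec_* f_* m) ⊗ 1` gives `a ⊗ 1 - act g a ⊗ 1` for a
  -- `g` with `act g a = sec (f a)`, which is `-1` times a balancing relation.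
  have hrange : LinearMap.range ((TensorProduct.mk k (α →₀ k) k).flip 1 ∘ₗ
      (LinearMap.id - lmapDomain k k sec ∘ₗ lmapDomain k k f)) ≤ balancedRel k G σ 1 := by
    rw [← Submodule.ker_mkQ (M := (α →₀ k) ⊗[k] k) (balancedRel k G σ 1),
      LinearMap.range_le_ker_iff]
    ext a
    obtain ⟨g, hg⟩ := horb a (sec (f a)) (Function.surjInv_eq hf _).symm
    have hgen : σ (op g) (single a 1) ⊗ₜ[k] (1 : k) + (-1 : k) • (single a 1 ⊗ₜ[k] (1 : k))
        ∈ balancedRel k G σ 1 :=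
      Submodule.subset_span ⟨g, single a 1, 1, rfl⟩
    have hrel : single a (1 : k) ⊗ₜ[k] (1 : k) - single (sec (f a)) 1 ⊗ₜ[k] 1 = (-1 : k) •
        (σ (op g) (single a 1) ⊗ₜ[k] (1 : k) + (-1 : k) • (single a 1 ⊗ₜ[k] (1 : k))) := by
      rw [hσ, hg]
      module
    simp only [LinearMap.comp_apply, LinearMap.zero_apply, Submodule.mkQ_apply,
      Submodule.Quotient.mk_eq_zero, lsingle_apply, LinearMap.sub_apply, LinearMap.id_apply,
      lmapDomain_apply, mapDomain_single, LinearMap.flip_apply, TensorProduct.mk_apply,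
      sub_tmul]
    rw [hrel]
    exact Submodule.smul_mem _ _ hgen
  intro x hx
  obtain ⟨m, rfl⟩ := (TensorProduct.rid k (α →₀ k)).symm.surjective x
  have hm : mapDomain f m = 0 := by simpa [lmapDomainRid] using hx
  simpa [hm] using hrange ⟨m, rfl⟩

theorem ker_lmapDomainRid (hσ : ∀ g a, σ (op g) (single a 1) = single (act g a) 1)
    (hf : Function.Surjective f) (hf_act : ∀ g a, f (act g a) = f a)
    (horb : ∀ a b, f a = f b → ∃ g, act g a = b) :
    LinearMap.ker (lmapDomainRid f) = balancedRel k G σ 1 :=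
  le_antisymm (ker_lmapDomainRid_le_balancedRel σ hσ hf horb)
    (balancedRel_le_ker_lmapDomainRid σ hσ hf_act)

end Coinvariants

end Finsupp

lemma IsPGroup.dvd_index_of_ne_top {p : ℕ} [Fact p.Prime] {G : Type} [Group G] [Finite G]
    (hG : IsPGroup p G) {H : Subgroup G} (hH : H ≠ ⊤) : p ∣ H.index := by
  obtain ⟨n, hn⟩ := hG.index H
  have hn0 : n ≠ 0 := by
    rintro rfl
    exact hH (Subgroup.index_eq_one.mp hn)
  exact hn ▸ dvd_pow_self p hn0

lemma Representation.coeff_ofMulAction_ofCoeff {k G H : Type} [Semiring k] [Monoid G]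
    [MulAction G H] (g : G) (m : H →₀ k) :
    (Representation.ofMulAction k G H g (MonoidAlgebra.ofCoeff m)).coeff =
      Finsupp.mapDomain (g • ·) m :=
  rfl

section FstQuotient

variable {Q P : Type} [Group Q] [Group P] (X : Subgroup (Q × P))

def fstQuotientMap : (Q × P) ⧸ X → Q ⧸ X.map (MonoidHom.fst Q P) :=
  Quotient.map' Prod.fst fun a b h => by
    rw [QuotientGroup.leftRel_apply] at *
    exact ⟨a⁻¹ * b, h, rfl⟩

lemma fstQuotientMap_surjective : Function.Surjective (fstQuotientMap X) := by
  rintro ⟨q⟩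
  exact ⟨((q, 1) : Q × P), rfl⟩

lemma fstQuotientMap_smul (u : Q × P) (a : (Q × P) ⧸ X) :
    fstQuotientMap X (u • a) = u.1 • fstQuotientMap X a := by
  induction a using QuotientGroup.induction_on
  rfl

lemma exists_inr_smul_eq_of_fstQuotientMap_eq {a b : (Q × P) ⧸ X}
    (h : fstQuotientMap X a = fstQuotientMap X b) : ∃ y : P, ((1 : Q), y) • a = b := by
  induction a using QuotientGroup.induction_on with | H u => ?_
  induction b using QuotientGroup.induction_on with | H v => ?_
  obtain ⟨x, hx, hx1⟩ := QuotientGroup.eq.mp h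
  have e : (((1 : Q), v.2 * x.2⁻¹ * u.2⁻¹) * u)⁻¹ * v = x := by
    ext <;> simp [← hx1]
  exact ⟨_, QuotientGroup.eq.mpr (e ▸ hx)⟩

end FstQuotient

theorem stmt5_general (p : ℕ) (hp : p.Prime) (k : Type) [Field k] [CharP k p]
    (Q P : Type) [Group Q] [Group P] [Fintype Q]
    (hQ : IsPGroup p Q)
    (X : Subgroup (Q × P))
    -- the right `P`-action on `k((Q×P)/X)` :  `[u]·y = [(1,y⁻¹)·u]`
    (σ : Representation k Pᵐᵒᵖ (((Q × P) ⧸ X) →₀ k))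
    (hσ : ∀ (y : P) (u : Q × P),
      σ (op y) (Finsupp.single (QuotientGroup.mk u) (1 : k)) =
        Finsupp.single (QuotientGroup.mk ((1, y⁻¹) * u)) (1 : k)) :
    (∃ φ : (((Q × P) ⧸ X) →₀ k) ⊗[k] k →ₗ[k]
        ((Q ⧸ Subgroup.map (MonoidHom.fst Q P) X) →₀ k),
      LinearMap.ker φ = balancedRel k P σ (1 : Representation k P k) ∧
      Function.Surjective φ ∧
      -- `φ` is `Q`-equivariant, for the left `Q`-action `q·[u] = [(q,1)·u]` on `k((Q×P)/X)`
      ∀ (q : Q) (m : ((Q × P) ⧸ X) →₀ k) (c : k),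
        φ ((((Representation.ofMulAction k (Q × P) ((Q × P) ⧸ X)).comp
            (MonoidHom.inl Q P)) q (MonoidAlgebra.ofCoeff m)).coeff ⊗ₜ c) =
          Finsupp.mapDomain (fun t => q • t) (φ (m ⊗ₜ c))) ∧
    Module.finrank k ((Q ⧸ Subgroup.map (MonoidHom.fst Q P) X) →₀ k) =
      (Subgroup.map (MonoidHom.fst Q P) X).index ∧
    (Subgroup.map (MonoidHom.fst Q P) X ≠ ⊤ →
      ((Subgroup.map (MonoidHom.fst Q P) X).index : k) = 0) := by
  have : Fact p.Prime := ⟨hp⟩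
  have hσ' : ∀ (y : P) (a : (Q × P) ⧸ X),
      σ (op y) (Finsupp.single a 1) = Finsupp.single (((1 : Q), y⁻¹) • a) 1 := by
    intro y a
    induction a using QuotientGroup.induction_on with | H u => exact hσ y u
  refine ⟨⟨Finsupp.lmapDomainRid (fstQuotientMap X), ?_, ?_, fun q m c => ?_⟩, ?_, fun hH => ?_⟩
  · refine Finsupp.ker_lmapDomainRid σ hσ' (fstQuotientMap_surjective X)
      (fun y a => by simp [fstQuotientMap_smul]) fun a b hab => ?_
    obtain ⟨y, hy⟩ := exists_inr_smul_eq_of_fstQuotientMap_eq X hab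
    exact ⟨y⁻¹, by rwa [inv_inv]⟩
  · exact Finsupp.lmapDomainRid_surjective (fstQuotientMap_surjective X)
  · rw [MonoidHom.comp_apply, Representation.coeff_ofMulAction_ofCoeff]
    exact Finsupp.lmapDomainRid_mapDomain (funext fun a => fstQuotientMap_smul X _ a) m c
  · have := Fintype.ofFinite (Q ⧸ X.map (MonoidHom.fst Q P))
    rw [Module.finrank_finsupp_self, Subgroup.index, Nat.card_eq_fintype_card]
  · exact (CharP.cast_eq_zero_iff k p _).mpr (hQ.dvd_index_of_ne_top hH)

/-- Let `k` have characteristic `p`, `Q, P` finite `p`-groups, and `X ≤ Q × P` a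
(twisted) diagonal subgroup (trivial intersections with `Q × 1` and `1 × P`).  The
`(kQ,kP)`-bimodule `k((Q×P)/X)` (with `q·[u]·y = [(q,y⁻¹)u]`) satisfies
`k((Q×P)/X) ⊗_{kP} k ≅ k(Q/p₁(X))` as `kQ`-modules, where `p₁(X)` is the projection of `X`
to `Q`.  In particular this element of `R_k(Q)` equals `|Q : p₁(X)|·[k_Q]`
(`k(Q/p₁(X))` has dimension `|Q : p₁(X)|` and, `Q` being a `p`-group, all its composition
factors are trivial), and it is `0` in `k ⊗_ℤ R_k(Q)` unless `p₁(X) = Q`, since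
`|Q : p₁(X)| = 0` in `k` in that case. -/
theorem stmt5 (p : ℕ) (hp : p.Prime) (k : Type) [Field k] [CharP k p]
    (Q P : Type) [Group Q] [Group P] [Fintype Q] [Fintype P]
    (hQ : IsPGroup p Q) (hP : IsPGroup p P)
    (X : Subgroup (Q × P))
    (hX1 : ∀ q : Q, (q, (1 : P)) ∈ X → q = 1)
    (hX2 : ∀ y : P, ((1 : Q), y) ∈ X → y = 1)
    -- the right `P`-action on `k((Q×P)/X)` :  `[u]·y = [(1,y⁻¹)·u]`
    (σ : Representation k Pᵐᵒᵖ (((Q × P) ⧸ X) →₀ k))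
    (hσ : ∀ (y : P) (u : Q × P),
      σ (op y) (Finsupp.single (QuotientGroup.mk u) (1 : k)) =
        Finsupp.single (QuotientGroup.mk ((1, y⁻¹) * u)) (1 : k)) :
    (∃ φ : (((Q × P) ⧸ X) →₀ k) ⊗[k] k →ₗ[k]
        ((Q ⧸ Subgroup.map (MonoidHom.fst Q P) X) →₀ k),
      LinearMap.ker φ = balancedRel k P σ (1 : Representation k P k) ∧
      Function.Surjective φ ∧
      -- `φ` is `Q`-equivariant, for the left `Q`-action `q·[u] = [(q,1)·u]` on `k((Q×P)/X)`
      ∀ (q : Q) (m : ((Q × P) ⧸ X) →₀ k) (c : k),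
        φ ((((Representation.ofMulAction k (Q × P) ((Q × P) ⧸ X)).comp
            (MonoidHom.inl Q P)) q (MonoidAlgebra.ofCoeff m)).coeff ⊗ₜ c) =
          Finsupp.mapDomain (fun t => q • t) (φ (m ⊗ₜ c))) ∧
    Module.finrank k ((Q ⧸ Subgroup.map (MonoidHom.fst Q P) X) →₀ k) =
      (Subgroup.map (MonoidHom.fst Q P) X).index ∧
    (Subgroup.map (MonoidHom.fst Q P) X ≠ ⊤ →
      ((Subgroup.map (MonoidHom.fst Q P) X).index : k) = 0) :=
  stmt5_general p hp k Q P hQ X σ hσ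
end
end

section
/- Let p be a prime, G a finite group, R a p-subgroup of G, and xR a p-regular element of the quotient group RC_G(R)/R. Then xR has defect zero in RC_G(R)/R (i.e., the centralizer of xR in RC_G(R)/R is a p'-group) if and only if there exists a p-regular element y ∈ C_G(R) with y ∈ xR such that R is a Sylow p-subgroup of RC_G(R,y), where C_G(R,y) = C_G(R) ∩ C_G(y). -/
/-!
Put `M = R C_G(R)`. A `p`-regular coset `ξ` lifts to a `p`-regular `y ∈ M` (the `p'`-part of
any lift), and such a `y` lies in `C_G(R)`: writing `y = a c` with `a ∈ R`, `c ∈ C_G(R)`, the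
power `y ^ p ^ k = c ^ p ^ k` lies in `C_G(R)` and generates `⟨y⟩`. For a `p`-regular
`y ∈ C_G(R)`, an `m ∈ M` centralizes `yR` iff it centralizes `y`: `m⁻¹ y m = y u` with `u ∈ R`
a `p`-element commuting with `y`, so comparing orders forces `u = 1`. Hence the centralizer of
`yR` is the image of `M ∩ C_G(y) = R C_G(R, y)`, of order `|R C_G(R, y) : R|`.
-/

open Subgroup

theorem exists_pow_coprime_orderOf_map_eq {G H : Type*} [Monoid G] [Monoid H] (f : G →* H)
    {p : ℕ} (hp : p.Prime) {x : G} (hx : IsOfFinOrder x) (hfx : (orderOf (f x)).Coprime p) :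
    ∃ n : ℕ, (orderOf (x ^ n)).Coprime p ∧ f (x ^ n) = f x := by
  set q := ordProj[p] (orderOf x)
  set m := ordCompl[p] (orderOf x)
  have hqm : q * m = orderOf x := Nat.ordProj_mul_ordCompl_eq_self _ p
  have hm : m.Coprime p := (Nat.coprime_ordCompl hp hx.orderOf_pos.ne').symm
  -- `q ^ φ(m)` is a multiple of the `p`-part `q` of `orderOf x` and is `1` modulo the `p'`-part
  refine ⟨q ^ m.totient, ?_, ?_⟩
  · refine hm.coprime_dvd_left (orderOf_dvd_of_pow_eq_one ?_)
    rw [← pow_mul, ← orderOf_dvd_iff_pow_eq_one, ← hqm]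
    refine mul_dvd_mul_right (dvd_pow_self q ?_) m
    exact (Nat.totient_pos.mpr (Nat.ordCompl_pos p hx.orderOf_pos.ne')).ne'
  · have hfm : orderOf (f x) ∣ m := by
      refine (hfx.pow_right ((orderOf x).factorization p)).dvd_of_dvd_mul_left ?_
      rw [hqm]
      exact orderOf_map_dvd f x
    have hmod : q ^ m.totient ≡ 1 [MOD orderOf (f x)] :=
      (Nat.ModEq.pow_totient (hm.symm.pow_left _)).of_dvd hfm
    rw [map_pow, ← pow_mod_orderOf, hmod, pow_mod_orderOf, pow_one]

namespace Subgroup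

variable {G : Type*} [Group G]

theorem mem_sup_centralizer_iff {R : Subgroup G} {g : G} :
    g ∈ R ⊔ centralizer (R : Set G) ↔
      ∃ a ∈ R, ∃ c ∈ centralizer (R : Set G), a * c = g := by
  rw [← SetLike.mem_coe, coe_mul_of_right_le_normalizer_left _ _ (centralizer_le_normalizer _),
    Set.mem_mul]
  rfl

theorem mem_sup_centralizer_inf_centralizer_iff {R : Subgroup G} {g y : G}
    (hy : y ∈ centralizer (R : Set G)) (hg : g ∈ R ⊔ centralizer (R : Set G)) :
    g ∈ R ⊔ (centralizer (R : Set G) ⊓ centralizer {y}) ↔ Commute g y := by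
  refine ⟨fun h => mem_centralizer_singleton_iff.mp ?_, fun hgy => ?_⟩
  · have hR : R ≤ centralizer {y} := fun a ha => mem_centralizer_singleton_iff.mpr (hy a ha)
    exact (sup_le hR inf_le_right : _ ≤ centralizer {y}) h
  · obtain ⟨a, ha, c, hc, rfl⟩ := mem_sup_centralizer_iff.mp hg
    have hcy : Commute c y := by simpa using (Commute.inv_left (hy a ha)).mul_left hgy
    exact mul_mem (mem_sup_left ha) (mem_sup_right ⟨hc, mem_centralizer_singleton_iff.mpr hcy⟩)

end Subgroup

namespace IsPGroup

variable {p : ℕ} {G : Type*} [Group G] {R : Subgroup G}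

theorem mem_centralizer_of_mem_sup_centralizer (hR : IsPGroup p R) {g : G}
    (hg : g ∈ R ⊔ centralizer (R : Set G)) (hgp : (orderOf g).Coprime p) :
    g ∈ centralizer (R : Set G) := by
  obtain ⟨a, ha, c, hc, rfl⟩ := mem_sup_centralizer_iff.mp hg
  obtain ⟨k, hk⟩ := hR ⟨a, ha⟩
  have hak : a ^ p ^ k = 1 := by simpa using congrArg Subtype.val hk
  have hpow : (a * c) ^ p ^ k ∈ centralizer (R : Set G) := by
    rw [Commute.mul_pow (hc a ha), hak, one_mul]
    exact pow_mem hc _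
  obtain ⟨n, hn⟩ := exists_pow_eq_self_of_coprime (hgp.symm.pow_left k)
  exact hn ▸ pow_mem hpow n

variable [Finite G]

theorem commute_of_inv_mul_mem (hR : IsPGroup p R) {g y : G}
    (hy : y ∈ centralizer (R : Set G)) (hyp : (orderOf y).Coprime p)
    (h : (g * y)⁻¹ * (y * g) ∈ R) : Commute g y := by
  set u := (g * y)⁻¹ * (y * g)
  obtain ⟨k, hk⟩ := hR ⟨u, h⟩
  have hu : orderOf u ∣ p ^ k :=
    orderOf_dvd_of_pow_eq_one (by simpa using congrArg Subtype.val hk)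
  have hconj : orderOf (y * u) = orderOf y := by
    refine (SemiconjBy.orderOf_eq g⁻¹ ?_).symm
    simp only [SemiconjBy, u]
    group
  have hmul : orderOf (y * u) = orderOf y * orderOf u :=
    Commute.orderOf_mul_eq_mul_orderOf_of_coprime (hy u h).symm
      ((hyp.pow_right k).coprime_dvd_right hu)
  have hu1 : orderOf u = 1 :=
    Nat.eq_of_mul_eq_mul_left (orderOf_pos y) (by rw [← hmul, hconj, mul_one])
  exact inv_mul_eq_one.mp (orderOf_eq_one_iff.mp hu1)

variable [(R.subgroupOf (R ⊔ centralizer (R : Set G))).Normal]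

theorem comap_mk'_centralizer_singleton_mk (hR : IsPGroup p R)
    {y : ↥(R ⊔ centralizer (R : Set G))}
    (hyC : (y : G) ∈ centralizer (R : Set G)) (hyp : (orderOf (y : G)).Coprime p) :
    (centralizer {(y : _ ⧸ R.subgroupOf (R ⊔ centralizer (R : Set G)))}).comap
        (QuotientGroup.mk' _) =
      (R ⊔ (centralizer (R : Set G) ⊓ centralizer {(y : G)})).subgroupOf
        (R ⊔ centralizer (R : Set G)) := by
  ext m
  rw [mem_comap, QuotientGroup.mk'_apply, mem_centralizer_singleton_iff, ← QuotientGroup.mk_mul,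
    ← QuotientGroup.mk_mul, mem_subgroupOf, mem_sup_centralizer_inf_centralizer_iff hyC m.2]
  refine ⟨fun hm => ?_, fun hm => congrArg _ (Subtype.ext hm)⟩
  exact hR.commute_of_inv_mul_mem hyC hyp (by simpa [mem_subgroupOf] using QuotientGroup.eq.mp hm)

theorem card_centralizer_mk_eq_index (hR : IsPGroup p R) {y : ↥(R ⊔ centralizer (R : Set G))}
    (hyC : (y : G) ∈ centralizer (R : Set G)) (hyp : (orderOf (y : G)).Coprime p) :
    Nat.card (centralizer {(y : _ ⧸ R.subgroupOf (R ⊔ centralizer (R : Set G)))}) =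
      (R.subgroupOf (R ⊔ (centralizer (R : Set G) ⊓ centralizer {(y : G)}))).index := by
  rw [← map_comap_eq_self_of_surjective (QuotientGroup.mk'_surjective _) (centralizer _),
    ← relIndex_ker, QuotientGroup.ker_mk', comap_mk'_centralizer_singleton_mk hR hyC hyp,
    relIndex_subgroupOf (sup_le le_sup_left (inf_le_left.trans le_sup_right))]
  rfl

theorem exists_coprime_orderOf_mk_eq (hp : p.Prime) (hR : IsPGroup p R)
    (ξ : _ ⧸ R.subgroupOf (R ⊔ centralizer (R : Set G))) (hξ : (orderOf ξ).Coprime p) :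
    ∃ y : ↥(R ⊔ centralizer (R : Set G)), (y : G) ∈ centralizer (R : Set G) ∧
      (orderOf (y : G)).Coprime p ∧ (y : _ ⧸ R.subgroupOf _) = ξ := by
  obtain ⟨x, rfl⟩ := QuotientGroup.mk_surjective ξ
  obtain ⟨n, hn, hxn⟩ :=
    exists_pow_coprime_orderOf_map_eq (QuotientGroup.mk' _) hp (isOfFinOrder_of_finite x) hξ
  rw [← orderOf_coe] at hn
  exact ⟨x ^ n, hR.mem_centralizer_of_mem_sup_centralizer (x ^ n).2 hn, hn, hxn⟩

end IsPGroup

/-- Let `R` be a `p`-subgroup of `G` and `ξ = xR` a `p`-regular element of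
`R·C_G(R)/R`.  Then `ξ` has defect zero in `R·C_G(R)/R` (its centralizer there is a `p'`-group)
iff there is a `p`-regular `y ∈ C_G(R)` lying in the coset `ξ` such that `R` is a Sylow
`p`-subgroup of `R·C_G(R,y)` (where `C_G(R,y) = C_G(R) ∩ C_G(y)`). -/
theorem stmt6 (p : ℕ) (hp : p.Prime) (G : Type) [Group G] [Finite G]
    (R : Subgroup G) (hR : IsPGroup p R)
    (M : Subgroup G) (hM : M = R ⊔ Subgroup.centralizer (R : Set G))
    [hN : (R.subgroupOf M).Normal]
    (ξ : M ⧸ R.subgroupOf M) (hξ : (orderOf ξ).Coprime p) :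
    (¬ p ∣ Nat.card (Subgroup.centralizer {ξ})) ↔
      ∃ y : M, (y : G) ∈ Subgroup.centralizer (R : Set G) ∧
        (orderOf (y : G)).Coprime p ∧
        QuotientGroup.mk y = ξ ∧
        ¬ p ∣ (R.subgroupOf (R ⊔ (Subgroup.centralizer (R : Set G) ⊓
            Subgroup.centralizer {(y : G)}))).index := by
  subst hM
  constructor
  · intro hξp
    obtain ⟨y, hyC, hyp, rfl⟩ := hR.exists_coprime_orderOf_mk_eq hp ξ hξ
    exact ⟨y, hyC, hyp, rfl, hR.card_centralizer_mk_eq_index hyC hyp ▸ hξp⟩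
  · rintro ⟨y, hyC, hyp, rfl, hy⟩
    rwa [hR.card_centralizer_mk_eq_index hyC hyp]
end

section
/- Let p be a prime, G a finite group, R a p-subgroup of G, and y a p-regular element of C_G(R). Then the stabilizer in N_G(R) of the RC_G(R)-conjugacy class of yR in RC_G(R)/R (under the conjugation action of N_G(R)) equals RC_G(R)·N_G(R,y), where N_G(R,y) = N_G(R) ∩ C_G(y). -/
/-!
If `g` stabilizes the class of `yR`, then after correcting `g` by some `c ∈ R·C_G(R)` we get
`n = c⁻¹g` with `n y n⁻¹ = y r` for some `r ∈ R`. Since `r` is a `p`-element commuting with the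
`p`-regular `y`, raising to the power `o(y)` gives `r ^ o(y) = 1`, hence `r = 1`, so `n`
centralizes `y`.
-/

open Subgroup

theorem Subgroup.sup_centralizer_le_normalizer {G : Type*} [Group G] (R : Subgroup G) :
    R ⊔ centralizer (R : Set G) ≤ normalizer (R : Set G) :=
  sup_le le_normalizer (centralizer_le_normalizer _)

theorem eq_one_of_conj_eq_mul_of_coprime_orderOf {G : Type*} [Group G] {n y r : G}
    (h : n * y * n⁻¹ = y * r) (hyr : Commute y r) (hcop : (orderOf y).Coprime (orderOf r)) :
    r = 1 := by
  have hpow : r ^ orderOf y = 1 :=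
    calc r ^ orderOf y = (y * r) ^ orderOf y := by
          rw [hyr.mul_pow, pow_orderOf_eq_one, one_mul]
      _ = (n * y * n⁻¹) ^ orderOf y := by rw [h]
      _ = 1 := by rw [conj_pow, pow_orderOf_eq_one, mul_one, mul_inv_cancel]
  exact orderOf_eq_one_iff.mp <|
    Nat.eq_one_of_dvd_coprimes hcop.symm dvd_rfl (orderOf_dvd_of_pow_eq_one hpow)

theorem IsPGroup.mem_centralizer_of_conj_eq_mul {p : ℕ} {G : Type*} [Group G] {R : Subgroup G}
    (hR : IsPGroup p R) {y : G} (hy : y ∈ centralizer (R : Set G)) (hyreg : (orderOf y).Coprime p)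
    {n r : G} (hr : r ∈ R) (h : n * y * n⁻¹ = y * r) : n ∈ centralizer {y} := by
  have hcop : (orderOf y).Coprime (orderOf r) := by
    simpa only [Subgroup.orderOf_mk] using (hR.orderOf_coprime hyreg.symm ⟨r, hr⟩).symm
  have hr1 : r = 1 := eq_one_of_conj_eq_mul_of_coprime_orderOf h (hy r hr).symm hcop
  rw [hr1, mul_one, mul_inv_eq_iff_eq_mul] at h
  exact mem_centralizer_singleton_iff.mpr h

theorem stmt7_general (p : ℕ) (G : Type) [Group G]
    (R : Subgroup G) (hR : IsPGroup p R)
    (y : G) (hy : y ∈ Subgroup.centralizer (R : Set G))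
    (hyreg : (orderOf y).Coprime p) :
    ∀ g : G,
      (g ∈ Subgroup.normalizer (R : Set G) ∧
        ∃ c ∈ R ⊔ Subgroup.centralizer (R : Set G), ∃ r ∈ R,
          g * y * g⁻¹ = (c * y * c⁻¹) * r) ↔
      (∃ m ∈ R ⊔ Subgroup.centralizer (R : Set G),
        ∃ n, n ∈ Subgroup.normalizer (R : Set G) ∧ n ∈ Subgroup.centralizer {y} ∧ g = m * n) := by
  intro g
  constructor
  · rintro ⟨hg, c, hc, r, hr, hconj⟩
    have hcN := R.sup_centralizer_le_normalizer hc
    have hr' : c⁻¹ * r * c ∈ R := (mem_normalizer_iff''.mp hcN r).mp hr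
    have hconj' : c⁻¹ * g * y * (c⁻¹ * g)⁻¹ = y * (c⁻¹ * r * c) :=
      calc c⁻¹ * g * y * (c⁻¹ * g)⁻¹ = c⁻¹ * (g * y * g⁻¹) * c := by group
        _ = y * (c⁻¹ * r * c) := by rw [hconj]; group
    exact ⟨c, hc, c⁻¹ * g, mul_mem (inv_mem hcN) hg,
      hR.mem_centralizer_of_conj_eq_mul hy hyreg hr' hconj', (mul_inv_cancel_left c g).symm⟩
  · rintro ⟨m, hm, n, hnN, hny, rfl⟩
    refine ⟨mul_mem (R.sup_centralizer_le_normalizer hm) hnN, m, hm, 1, one_mem R, ?_⟩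
    calc m * n * y * (m * n)⁻¹ = m * (n * y * n⁻¹) * m⁻¹ := by group
      _ = m * y * m⁻¹ * 1 := by rw [mem_centralizer_singleton_iff.mp hny]; group

/-- For a `p`-subgroup `R ≤ G` and a `p`-regular `y ∈ C_G(R)`, the stabilizer in
`N_G(R)` of the `R·C_G(R)`-conjugacy class of `yR` in `R·C_G(R)/R` equals
`R·C_G(R) · N_G(R,y)` where `N_G(R,y) = N_G(R) ∩ C_G(y)`.  (An element `g ∈ N_G(R)` stabilizes
the class of `yR` iff `g·y·g⁻¹ ∈ (c·y·c⁻¹)·R` for some `c ∈ R·C_G(R)`.) -/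
theorem stmt7 (p : ℕ) (hp : p.Prime) (G : Type) [Group G] [Finite G]
    (R : Subgroup G) (hR : IsPGroup p R)
    (y : G) (hy : y ∈ Subgroup.centralizer (R : Set G))
    (hyreg : (orderOf y).Coprime p) :
    ∀ g : G,
      (g ∈ Subgroup.normalizer (R : Set G) ∧
        ∃ c ∈ R ⊔ Subgroup.centralizer (R : Set G), ∃ r ∈ R,
          g * y * g⁻¹ = (c * y * c⁻¹) * r) ↔
      (∃ m ∈ R ⊔ Subgroup.centralizer (R : Set G),
        ∃ n, n ∈ Subgroup.normalizer (R : Set G) ∧ n ∈ Subgroup.centralizer {y} ∧ g = m * n) :=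
  stmt7_general p G R hR y hy hyreg
end

section
/- Let p be a prime, G a finite group, R a p-subgroup, y ∈ C_G(R) a p-regular element, and c ∈ RC_G(R), r ∈ R, g ∈ G such that g·y·g⁻¹ = (c·y·c⁻¹)·r. Then r = 1 and g·y·g⁻¹ = c·y·c⁻¹. -/
/-!
Since `R·C_G(R)` normalizes `C_G(R)`, the conjugate `c·y·c⁻¹` lies in `C_G(R)` and so commutes
with `r`. Its order is that of `y`, hence prime to `p` and to the order of `r`, so the order of
`(c·y·c⁻¹)·r` is `o(y)·o(r)`; but this element is conjugate to `y`, so `o(r) = 1`.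
-/

open Subgroup

theorem orderOf_conj {G : Type*} [Group G] (c y : G) : orderOf (c * y * c⁻¹) = orderOf y :=
  (MulAut.conj c).orderOf_eq y

theorem Subgroup.sup_centralizer_le_normalizer_centralizer {G : Type*} [Group G]
    (H : Subgroup G) :
    H ⊔ centralizer (H : Set G) ≤ normalizer (centralizer (H : Set G) : Set G) :=
  sup_le (le_normalizer.trans (le_normalizer_of_normal_subgroupOf (centralizer_le_normalizer _)))
    le_normalizer

theorem Commute.eq_one_of_orderOf_mul_eq {M : Type*} [Monoid M] {x y : M} (h : Commute x y)
    (hco : (orderOf x).Coprime (orderOf y)) (hxy : orderOf (x * y) = orderOf x) : y = 1 := by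
  have hdvd : orderOf y ∣ orderOf x := by
    rw [← hxy, h.orderOf_mul_eq_mul_orderOf_of_coprime hco]
    exact dvd_mul_left _ _
  exact orderOf_eq_one_iff.mp (hco.symm.eq_one_of_dvd hdvd)

theorem stmt8_general (p : ℕ) (G : Type) [Group G]
    (R : Subgroup G) (hR : IsPGroup p R)
    (y : G) (hy : y ∈ Subgroup.centralizer (R : Set G))
    (hyreg : (orderOf y).Coprime p)
    (c r g : G) (hc : c ∈ R ⊔ Subgroup.centralizer (R : Set G)) (hr : r ∈ R)
    (h : g * y * g⁻¹ = (c * y * c⁻¹) * r) :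
    r = 1 ∧ g * y * g⁻¹ = c * y * c⁻¹ := by
  have hcy : c * y * c⁻¹ ∈ centralizer (R : Set G) :=
    (R.sup_centralizer_le_normalizer_centralizer hc y).mp hy
  have hco : (orderOf (c * y * c⁻¹)).Coprime (orderOf r) := by
    rw [orderOf_conj, ← orderOf_mk r hr]
    exact (hR.orderOf_coprime hyreg.symm _).symm
  have hr1 : r = 1 :=
    (Commute.symm (hcy r hr)).eq_one_of_orderOf_mul_eq hco (by rw [← h, orderOf_conj, orderOf_conj])
  exact ⟨hr1, by rw [h, hr1, mul_one]⟩

/-- If `y` is a `p`-regular element of `C_G(R)`, `c ∈ R·C_G(R)`, `r ∈ R` and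
`g·y·g⁻¹ = (c·y·c⁻¹)·r`, then `r = 1` and `g·y·g⁻¹ = c·y·c⁻¹`. -/
theorem stmt8 (p : ℕ) (hp : p.Prime) (G : Type) [Group G] [Finite G]
    (R : Subgroup G) (hR : IsPGroup p R)
    (y : G) (hy : y ∈ Subgroup.centralizer (R : Set G))
    (hyreg : (orderOf y).Coprime p)
    (c r g : G) (hc : c ∈ R ⊔ Subgroup.centralizer (R : Set G)) (hr : r ∈ R)
    (h : g * y * g⁻¹ = (c * y * c⁻¹) * r) :
    r = 1 ∧ g * y * g⁻¹ = c * y * c⁻¹ :=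
  stmt8_general p G R hR y hy hyreg c r g hc hr h
end

section
/- Let (K, O, k) be a p-modular system with K big enough for the finite group G, and let x be a p-regular element of G of defect zero (C_G(x) a p'-group). Let v_x = Ind_{⟨x⟩}^G(|x|·1_x), where 1_x : ⟨x⟩ → O is the class function with value 1 at x and 0 elsewhere, so that |x|·1_x = Σ_ζ ζ(x⁻¹)ζ over the characters ζ of ⟨x⟩, is a virtual projective character. Then the modular character of v_x satisfies Φ_{v_x}(g) = |C_G(x)| if g is G-conjugate to x, and Φ_{v_x}(g) = 0 for all other p-regular g. -/
open Finset

section Conjugators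

variable {G : Type*} [Group G]

theorem conj_conj_eq_iff_mem_centralizer (x c h : G) :
    h⁻¹ * (c * x * c⁻¹) * h = x ↔ c⁻¹ * h ∈ Subgroup.centralizer {x} := by
  rw [Subgroup.mem_centralizer_singleton_iff,
    show h⁻¹ * (c * x * c⁻¹) * h = (c⁻¹ * h)⁻¹ * (x * (c⁻¹ * h)) by group,
    inv_mul_eq_iff_eq_mul, eq_comm]

variable [Fintype G] [DecidableEq G]

/-- The elements conjugating `g` to `x` form a left coset of `C_G(x)`. -/
theorem card_filter_conj_eq_card_centralizer {x g : G} (hxg : IsConj x g) :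
    #{h | h⁻¹ * g * h = x} = Nat.card (Subgroup.centralizer {x}) := by
  obtain ⟨c, rfl⟩ := isConj_iff.mp hxg
  rw [← Fintype.card_subtype, ← Nat.card_eq_fintype_card]
  exact Nat.card_congr <| (Equiv.mulLeft c⁻¹).subtypeEquiv
    fun h ↦ conj_conj_eq_iff_mem_centralizer x c h

theorem sum_ite_conj_eq {M : Type*} [AddCommMonoid M] (x g : G) (a : M) :
    ∑ h : G, (if h⁻¹ * g * h = x then a else 0) =
      if IsConj x g then Nat.card (Subgroup.centralizer {x}) • a else 0 := by
  rw [← sum_filter, sum_const]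
  split_ifs with hxg
  · rw [card_filter_conj_eq_card_centralizer hxg]
  · refine smul_eq_zero_of_left (card_eq_zero.mpr <| filter_eq_empty_iff.mpr ?_) a
    rintro h - rfl
    exact hxg (isConj_iff.mpr ⟨h, by group⟩)

end Conjugators

theorem stmt10_general (p : ℕ) (G : Type) [Group G] [Fintype G] [DecidableEq G]
    (K : Type) [Field K] [CharZero K]
    (x : G)
    (f : G → K) (hf : ∀ t : G, f t = if t = x then (orderOf x : K) else 0)
    (Φ : G → K)
    (hΦ : ∀ g : G, Φ g = (orderOf x : K)⁻¹ * ∑ h : G, f (h⁻¹ * g * h)) :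
    ∀ g : G, (orderOf g).Coprime p →
      (IsConj x g → Φ g = (Nat.card ↥(Subgroup.centralizer {x}) : K)) ∧
      (¬ IsConj x g → Φ g = 0) := by
  intro g _
  have horder : (orderOf x : K) ≠ 0 := by exact_mod_cast (orderOf_pos x).ne'
  simp only [hΦ, hf, sum_ite_conj_eq, nsmul_eq_mul]
  constructor
  · intro hxg
    rw [if_pos hxg, mul_left_comm, inv_mul_cancel₀ horder, mul_one]
  · intro hxg
    rw [if_neg hxg, mul_zero]

/-- Let `x` be a `p`-regular element of defect zero of the finite group `G`
(its centralizer is a `p'`-group).  Let `v_x = Ind_{⟨x⟩}^G (|x|·1_x)`, the virtual projective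
character induced from the class function on `⟨x⟩` with value `|x|` at `x` and `0` elsewhere.
Its (modular) character, given by the induction formula
`Φ_{v_x}(g) = (1/|x|) · Σ_{h ∈ G} f(h⁻¹gh)` with `f(t) = |x|` if `t = x` and `0` otherwise,
satisfies `Φ_{v_x}(g) = |C_G(x)|` if `g` is `G`-conjugate to `x`, and `Φ_{v_x}(g) = 0` for all
other `p`-regular `g`. -/
theorem stmt10 (p : ℕ) (hp : p.Prime) (G : Type) [Group G] [Fintype G] [DecidableEq G]
    (K : Type) [Field K] [CharZero K]
    (x : G) (hxreg : (orderOf x).Coprime p)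
    (hxdef : ¬ p ∣ Nat.card ↥(Subgroup.centralizer {x}))
    (f : G → K) (hf : ∀ t : G, f t = if t = x then (orderOf x : K) else 0)
    (Φ : G → K)
    (hΦ : ∀ g : G, Φ g = (orderOf x : K)⁻¹ * ∑ h : G, f (h⁻¹ * g * h)) :
    ∀ g : G, (orderOf g).Coprime p →
      (IsConj x g → Φ g = (Nat.card ↥(Subgroup.centralizer {x}) : K)) ∧
      (¬ IsConj x g → Φ g = 0) :=
  stmt10_general p G K x f hf Φ hΦ
end
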